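/- There exist ε₀ > 0, δ > 0, C > 0, and a function κ : (0, ε₀) → ℂ such that for every ε ∈ (0, ε₀): (i) (α₊+2κ(ε))(α₋+2κ(ε)) = α₊α₋·e^{-4κ(ε)ε}; (ii) κ(ε) is the unique complex number z with |z - κ₀| ≤ δ satisfying (α₊+2z)(α₋+2z) = α₊α₋·e^{-4zε}; and (iii) |κ(ε) - κ₀ + α₊α₋·ε| ≤ C·ε², i.e. κ(ε) = κ₀ - α₊α₋·ε + O(ε²) as ε → 0⁺. -/

import Mathlib

open Set Complex Metric Filter Topology NNReal

/-! For `z ≠ 0` the equation is equivalent to the fixed-point equation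
`z = κ₀ + α₊α₋ (e^{-4zε} - 1) / (4z)`. On the closed ball of radius `‖κ₀‖/2` about `κ₀`, which
avoids `0`, the correction term `(e^{-4zε} - 1) / (4z)` is `O(ε)` with derivative `O(ε²)`, so for
small `ε` the right-hand side maps the ball into itself and is a contraction: the Banach
fixed-point theorem gives `κ(ε)` and its uniqueness in the ball. Since `e^w - 1 - w = O(w²)`, the
correction term is `-ε + O(ε²)`, whence `κ(ε) = κ₀ - α₊α₋ ε + O(ε²)`. -/

theorem exists_unique_fixedPoint_of_lipschitzOnWith {α : Type*} [MetricSpace α] {s : Set α}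
    (hs : IsComplete s) (hne : s.Nonempty) {f : α → α} (hf : MapsTo f s s) {K : ℝ≥0}
    (hK : K < 1) (hlip : LipschitzOnWith K f s) : ∃! x, x ∈ s ∧ f x = x := by
  obtain ⟨x₀, hx₀⟩ := hne
  obtain ⟨x, hx, hfix, -⟩ := ContractingWith.exists_fixedPoint' hs hf
    ⟨hK, hlip.mapsToRestrict hf⟩ hx₀ (edist_ne_top _ _)
  refine ⟨x, ⟨hx, hfix⟩, fun y ⟨hy, hfy⟩ => dist_le_zero.1 ?_⟩
  have := hlip.dist_le_mul y hy x hx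
  rw [hfy, hfix.eq] at this
  nlinarith [dist_nonneg (x := y) (y := x), show (K : ℝ) < 1 from hK]

noncomputable def expCorrection (ε z : ℂ) : ℂ := (cexp (-4 * z * ε) - 1) / (4 * z)

theorem add_mul_expCorrection_eq_iff {αp αm z : ℂ} (ε : ℂ) (hz : z ≠ 0) :
    -(αp + αm) / 2 + αp * αm * expCorrection ε z = z ↔
      (αp + 2 * z) * (αm + 2 * z) = αp * αm * cexp (-4 * z * ε) := by
  rw [expCorrection, mul_div_assoc', div_add_div _ _ two_ne_zero (by simpa using hz),
    div_eq_iff (by simpa using hz)]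
  constructor
  · intro h; linear_combination -h / 2
  · intro h; linear_combination -2 * h

section Estimates

variable {ε z : ℂ}

theorem norm_neg_four_mul_mul (z ε : ℂ) : ‖-4 * z * ε‖ = 4 * ‖z‖ * ‖ε‖ := by
  simp

theorem norm_expCorrection_le (h : 4 * ‖z‖ * ‖ε‖ ≤ 1) : ‖expCorrection ε z‖ ≤ 2 * ‖ε‖ := by
  have hexp := Complex.norm_exp_sub_one_le ((norm_neg_four_mul_mul z ε).trans_le h)
  rw [expCorrection, norm_div]
  refine div_le_of_le_mul₀ (norm_nonneg _) (by positivity) (hexp.trans_eq ?_)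
  rw [norm_neg_four_mul_mul]; simp; ring

theorem norm_expCorrection_add_le (hz : z ≠ 0) (h : 4 * ‖z‖ * ‖ε‖ ≤ 1) :
    ‖expCorrection ε z + ε‖ ≤ 4 * ‖z‖ * ‖ε‖ ^ 2 := by
  have hexp := Complex.norm_exp_sub_one_sub_id_le ((norm_neg_four_mul_mul z ε).trans_le h)
  have hid : expCorrection ε z + ε = (cexp (-4 * z * ε) - 1 - -4 * z * ε) / (4 * z) := by
    rw [expCorrection]; field_simp; ring
  rw [hid, norm_div]
  refine div_le_of_le_mul₀ (norm_nonneg _) (by positivity) ?_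
  refine hexp.trans_eq ?_
  rw [norm_neg_four_mul_mul]; simp; ring

theorem hasDerivAt_expCorrection (ε : ℂ) (hz : z ≠ 0) :
    HasDerivAt (expCorrection ε)
      ((-4 * z * ε * cexp (-4 * z * ε) - cexp (-4 * z * ε) + 1) / (4 * z ^ 2)) z := by
  have hexp : HasDerivAt (fun w => cexp (-4 * w * ε) - 1) (cexp (-4 * z * ε) * (-4 * ε)) z := by
    have := ((hasDerivAt_id z).const_mul (-4 : ℂ)).mul_const ε
    simpa using this.cexp.sub_const 1
  have hlin : HasDerivAt (fun w : ℂ => 4 * w) 4 z := by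
    simpa using (hasDerivAt_id z).const_mul (4 : ℂ)
  refine (hexp.div hlin (by simpa using hz)).congr_deriv ?_
  field_simp
  ring

theorem norm_deriv_expCorrection_le (h : 4 * ‖z‖ * ‖ε‖ ≤ 1) :
    ‖(-4 * z * ε * cexp (-4 * z * ε) - cexp (-4 * z * ε) + 1) / (4 * z ^ 2)‖ ≤ 12 * ‖ε‖ ^ 2 := by
  set w := -4 * z * ε
  have hwz : ‖w‖ = 4 * ‖z‖ * ‖ε‖ := norm_neg_four_mul_mul z ε
  rw [← hwz] at h
  have h₁ := Complex.norm_exp_sub_one_le h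
  have h₂ := Complex.norm_exp_sub_one_sub_id_le h
  have hnum : ‖w * cexp w - cexp w + 1‖ ≤ 3 * ‖w‖ ^ 2 := calc
    ‖w * cexp w - cexp w + 1‖ = ‖w * (cexp w - 1) - (cexp w - 1 - w)‖ := by ring_nf
    _ ≤ ‖w‖ * ‖cexp w - 1‖ + ‖cexp w - 1 - w‖ := (norm_sub_le _ _).trans (by rw [norm_mul])
    _ ≤ ‖w‖ * (2 * ‖w‖) + ‖w‖ ^ 2 := by gcongr
    _ = 3 * ‖w‖ ^ 2 := by ring
  rw [norm_div]
  refine div_le_of_le_mul₀ (norm_nonneg _) (by positivity) (hnum.trans_eq ?_)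
  rw [hwz]; simp; ring

theorem norm_expCorrection_sub_le {s : Set ℂ} (hs : Convex ℝ s)
    (hs₀ : ∀ z ∈ s, z ≠ 0 ∧ 4 * ‖z‖ * ‖ε‖ ≤ 1) {x y : ℂ} (hx : x ∈ s) (hy : y ∈ s) :
    ‖expCorrection ε x - expCorrection ε y‖ ≤ 12 * ‖ε‖ ^ 2 * ‖x - y‖ :=
  hs.norm_image_sub_le_of_norm_hasDerivWithin_le
    (fun z hz => (hasDerivAt_expCorrection ε (hs₀ z hz).1).hasDerivWithinAt)
    (fun z hz => norm_deriv_expCorrection_le (hs₀ z hz).2) hy hx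

end Estimates

theorem ne_zero_of_mem_closedBall_half_norm {E : Type*} [NormedAddCommGroup E] {c z : E}
    (hc : c ≠ 0) (hz : z ∈ closedBall c (‖c‖ / 2)) : z ≠ 0 := by
  rintro rfl
  rw [mem_closedBall, dist_zero_left] at hz
  linarith [norm_pos_iff.2 hc]

theorem exists_unique_fixedPoint_add_mul_expCorrection {κ₀ a ε : ℂ} (hκ₀ : κ₀ ≠ 0)
    (h₁ : 6 * ‖κ₀‖ * ‖ε‖ ≤ 1) (h₂ : 4 * ‖a‖ * ‖ε‖ ≤ ‖κ₀‖) (h₃ : 24 * ‖a‖ * ‖ε‖ ^ 2 ≤ 1) :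
    ∃! x, x ∈ closedBall κ₀ (‖κ₀‖ / 2) ∧ κ₀ + a * expCorrection ε x = x := by
  have hB : ∀ z ∈ closedBall κ₀ (‖κ₀‖ / 2), z ≠ 0 ∧ 4 * ‖z‖ * ‖ε‖ ≤ 1 := fun z hz =>
    ⟨ne_zero_of_mem_closedBall_half_norm hκ₀ hz,
      by nlinarith [norm_le_of_mem_closedBall hz, norm_nonneg ε]⟩
  refine exists_unique_fixedPoint_of_lipschitzOnWith isClosed_closedBall.isComplete
    ⟨κ₀, mem_closedBall_self (by positivity)⟩ (fun z hz => ?_) (K := 2⁻¹) (by norm_num)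
    (LipschitzOnWith.of_dist_le_mul fun x hx y hy => ?_)
  · rw [mem_closedBall, dist_eq_norm, add_sub_cancel_left, norm_mul]
    calc ‖a‖ * ‖expCorrection ε z‖ ≤ ‖a‖ * (2 * ‖ε‖) := by
          gcongr; exact norm_expCorrection_le (hB z hz).2
      _ ≤ ‖κ₀‖ / 2 := by linarith
  · rw [dist_eq_norm, dist_eq_norm, add_sub_add_left_eq_sub, ← mul_sub, norm_mul]
    calc ‖a‖ * ‖expCorrection ε x - expCorrection ε y‖ ≤ ‖a‖ * (12 * ‖ε‖ ^ 2 * ‖x - y‖) := by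
          gcongr; exact norm_expCorrection_sub_le (convex_closedBall _ _) hB hx hy
      _ ≤ (2⁻¹ : ℝ≥0) * ‖x - y‖ := by push_cast; nlinarith [norm_nonneg (x - y), norm_nonneg a]

theorem norm_sub_add_mul_le_of_fixed {κ₀ a ε x : ℂ} (hκ₀ : κ₀ ≠ 0) (h₁ : 6 * ‖κ₀‖ * ‖ε‖ ≤ 1)
    (hx : x ∈ closedBall κ₀ (‖κ₀‖ / 2)) (hfix : κ₀ + a * expCorrection ε x = x) :
    ‖x - κ₀ + a * ε‖ ≤ 6 * ‖a‖ * ‖κ₀‖ * ‖ε‖ ^ 2 := by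
  have hx' := norm_le_of_mem_closedBall hx
  have hbound := norm_expCorrection_add_le (ne_zero_of_mem_closedBall_half_norm hκ₀ hx) (ε := ε)
    (by nlinarith [norm_nonneg ε])
  rw [← hfix, add_sub_cancel_left, ← mul_add, norm_mul]
  calc ‖a‖ * ‖expCorrection ε x + ε‖ ≤ ‖a‖ * (4 * ‖x‖ * ‖ε‖ ^ 2) := by gcongr
    _ ≤ ‖a‖ * (4 * (‖κ₀‖ + ‖κ₀‖ / 2) * ‖ε‖ ^ 2) := by gcongr
    _ = 6 * ‖a‖ * ‖κ₀‖ * ‖ε‖ ^ 2 := by ring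

theorem eventually_small_parameter (κ₀ a : ℂ) (hκ₀ : κ₀ ≠ 0) :
    ∀ᶠ ε in 𝓝 (0 : ℂ), 6 * ‖κ₀‖ * ‖ε‖ ≤ 1 ∧ 4 * ‖a‖ * ‖ε‖ ≤ ‖κ₀‖ ∧ 24 * ‖a‖ * ‖ε‖ ^ 2 ≤ 1 := by
  have h : ∀ {f : ℂ → ℝ} {c : ℝ}, Continuous f → f 0 < c → ∀ᶠ ε in 𝓝 0, f ε ≤ c :=
    fun hf h₀ => (hf.continuousAt.eventually_lt continuousAt_const h₀).mono fun _ => le_of_lt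
  exact (h (by fun_prop) (by simp)).and ((h (by fun_prop) (by simpa using hκ₀)).and
    (h (by fun_prop) (by simp)))

theorem stmt_5 (αp αm : ℂ) (hα : (αp + αm).re < 0) :
    ∃ ε₀ > (0 : ℝ), ∃ δ > (0 : ℝ), ∃ C > (0 : ℝ), ∃ κ : ℝ → ℂ,
      ∀ ε ∈ Ioo (0 : ℝ) ε₀,
        (αp + 2 * κ ε) * (αm + 2 * κ ε) = αp * αm * Complex.exp (-4 * κ ε * ε) ∧
        ‖κ ε - (-(αp + αm) / 2)‖ ≤ δ ∧
        (∀ z : ℂ, ‖z - (-(αp + αm) / 2)‖ ≤ δ →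
          (αp + 2 * z) * (αm + 2 * z) = αp * αm * Complex.exp (-4 * z * ε) → z = κ ε) ∧
        ‖κ ε - (-(αp + αm) / 2) + αp * αm * ε‖ ≤ C * ε ^ 2 := by
  set κ₀ := -(αp + αm) / 2 with hκ₀_def
  have hκ₀ : κ₀ ≠ 0 := fun h => by
    have := congrArg Complex.re h
    simp [hκ₀_def] at this
    linarith [Complex.add_re αp αm]
  obtain ⟨ε₀, hε₀, hsmall⟩ :=
    Metric.eventually_nhds_iff.1 (eventually_small_parameter κ₀ (αp * αm) hκ₀)
  have key : ∀ ε ∈ Ioo (0 : ℝ) ε₀, ∃ x : ℂ,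
      (αp + 2 * x) * (αm + 2 * x) = αp * αm * cexp (-4 * x * ε) ∧ ‖x - κ₀‖ ≤ ‖κ₀‖ / 2 ∧
      (∀ z : ℂ, ‖z - κ₀‖ ≤ ‖κ₀‖ / 2 →
        (αp + 2 * z) * (αm + 2 * z) = αp * αm * cexp (-4 * z * ε) → z = x) ∧
      ‖x - κ₀ + αp * αm * ε‖ ≤ (6 * ‖αp * αm‖ * ‖κ₀‖ + 1) * ε ^ 2 := by
    rintro ε ⟨hε, hεε₀⟩
    have hnorm : ‖(ε : ℂ)‖ = ε := by simp [hε.le]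
    obtain ⟨h₁, h₂, h₃⟩ := hsmall (y := ε) (by rwa [dist_zero_right, hnorm])
    obtain ⟨x, ⟨hxB, hfix⟩, huniq⟩ := exists_unique_fixedPoint_add_mul_expCorrection hκ₀ h₁ h₂ h₃
    have hroot : ∀ z ∈ closedBall κ₀ (‖κ₀‖ / 2), κ₀ + αp * αm * expCorrection ε z = z ↔
        (αp + 2 * z) * (αm + 2 * z) = αp * αm * cexp (-4 * z * ε) := fun z hz =>
      add_mul_expCorrection_eq_iff _ (ne_zero_of_mem_closedBall_half_norm hκ₀ hz)
    refine ⟨x, (hroot x hxB).1 hfix, mem_closedBall_iff_norm.1 hxB, fun z hz hzeq => ?_, ?_⟩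
    · rw [← mem_closedBall_iff_norm] at hz
      exact huniq z ⟨hz, (hroot z hz).2 hzeq⟩
    · calc _ ≤ 6 * ‖αp * αm‖ * ‖κ₀‖ * ‖(ε : ℂ)‖ ^ 2 :=
            norm_sub_add_mul_le_of_fixed hκ₀ h₁ hxB hfix
        _ = 6 * ‖αp * αm‖ * ‖κ₀‖ * ε ^ 2 := by rw [hnorm]
        _ ≤ (6 * ‖αp * αm‖ * ‖κ₀‖ + 1) * ε ^ 2 := by nlinarith [sq_nonneg ε]
  choose! κ hκ using key
  exact ⟨ε₀, hε₀, ‖κ₀‖ / 2, by positivity, _, by positivity, κ, hκ⟩
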